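/- arXiv:2602.16333 — 2 statements merged into one kernel-verified Lean document; each statement's English description precedes it below -/
import Mathlib

section
/- Let D be a digraph and suppose its cycle graph C(D) contains an induced cycle of length ℓ ≥ 4. Then D contains a directed cycle of length at least ℓ. -/
/-- `D.HasDirCycleOfLen n` means that `D` contains a directed cycle of length `n`. -/
def Digraph.HasDirCycleOfLen {V : Type*} (D : Digraph V) (n : ℕ) : Prop :=
  1 ≤ n ∧ ∃ f : ZMod n → V, Function.Injective f ∧ ∀ i, D.Adj (f i) (f (i + 1))

/-- `A` is the arc set of some directed cycle of `D`. We identify a directed cycle of `D`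
with its set of arcs (which determines it up to rotation of the cyclic sequence). -/
def Digraph.IsDirCycleSet {V : Type*} (D : Digraph V) (A : Set (V × V)) : Prop :=
  ∃ n : ℕ, 1 ≤ n ∧ ∃ f : ZMod n → V, Function.Injective f ∧
    (∀ i, D.Adj (f i) (f (i + 1))) ∧ A = Set.range fun i => (f i, f (i + 1))

/-- The set of vertices of a directed cycle, given by its arc set. -/
def cycleVerts {V : Type*} (A : Set (V × V)) : Set V := Prod.fst '' A

/-- The cycle graph `C(D)` of a digraph `D` : its vertices are the directed cycles of
`D`, two of them being adjacent iff they are distinct and share at least one vertex. -/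
def Digraph.cycleGraph {V : Type*} (D : Digraph V) :
    SimpleGraph {A : Set (V × V) // D.IsDirCycleSet A} where
  Adj C₁ C₂ := C₁ ≠ C₂ ∧ (cycleVerts C₁.1 ∩ cycleVerts C₂.1).Nonempty
  symm := ⟨fun C₁ C₂ h => ⟨h.1.symm, by rw [Set.inter_comm]; exact h.2⟩⟩
  loopless := ⟨fun C h => h.1 rfl⟩

/-- `G.HasInducedCycleOfLen ℓ` : the graph `G` contains an induced cycle of length `ℓ`,
i.e. `ℓ` distinct vertices `u_1, …, u_ℓ` such that `u_i` is adjacent to `u_j` iff `i` and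
`j` are consecutive modulo `ℓ`. -/
def SimpleGraph.HasInducedCycleOfLen {W : Type*} (G : SimpleGraph W) (ℓ : ℕ) : Prop :=
  ∃ f : ZMod ℓ → W, Function.Injective f ∧
    ∀ i j, G.Adj (f i) (f j) ↔ (j = i + 1 ∨ i = j + 1)

/-!
Let `C 0, …, C (ℓ - 1)` be the directed cycles forming the induced cycle of `C(D)`. Walk along
`C 0` until first meeting `C 1`, then along `C 1` until first meeting `C 2`, and so on, and finally
along `C (ℓ - 1)` back to the start. Since non-consecutive cycles are vertex-disjoint and each leg
stops at the first vertex of the next cycle, the legs are pairwise disjoint, so the closed walk is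
a directed cycle; each leg is nonempty, so its length is at least `ℓ`.
-/

section

variable {V : Type*}

theorem cycleVerts_range {n : ℕ} (f : ZMod n → V) :
    cycleVerts (Set.range fun i => (f i, f (i + 1))) = Set.range f := by
  simp only [cycleVerts, ← Set.range_comp]
  rfl

theorem Digraph.IsDirCycleSet.exists_path_to {D : Digraph V} {A : Set (V × V)}
    (hA : D.IsDirCycleSet A) {T : Set V} {v : V} (hv : v ∈ cycleVerts A) (hvT : v ∉ T)
    (hT : (cycleVerts A ∩ T).Nonempty) :
    ∃ P : List V, P.head? = some v ∧ P.Nodup ∧ P.IsChain D.Adj ∧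
      (∀ x ∈ P, x ∈ cycleVerts A ∧ x ∉ T) ∧
      ∃ t ∈ cycleVerts A ∩ T, ∀ x ∈ P.getLast?, D.Adj x t := by
  classical
  obtain ⟨n, hn, f, hf, hadj, rfl⟩ := hA
  have : NeZero n := ⟨by omega⟩
  rw [cycleVerts_range] at hv hT ⊢
  obtain ⟨a, rfl⟩ := hv
  obtain ⟨_, ⟨b, rfl⟩, hbT⟩ := hT
  have hex : ∃ k : ℕ, f (a + k) ∈ T := ⟨(b - a).val, by simpa [ZMod.natCast_zmod_val] using hbT⟩
  obtain ⟨k, hkT, hk_min⟩ : ∃ k : ℕ, f (a + k) ∈ T ∧ ∀ i < k, f (a + (i : ℕ)) ∉ T :=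
    ⟨Nat.find hex, Nat.find_spec hex, fun i hi => Nat.find_min hex hi⟩
  have hkn : k < n := by
    by_contra! h
    exact hk_min _ ((ZMod.val_lt (b - a)).trans_le h) (by simpa [ZMod.natCast_zmod_val] using hbT)
  obtain ⟨k, rfl⟩ : ∃ k', k = k' + 1 :=
    Nat.exists_eq_add_one_of_ne_zero fun h => hvT (by simpa [h] using hkT)
  refine ⟨(List.range (k + 1)).map fun i : ℕ => f (a + i), by simp [List.head?_range], ?_, ?_, ?_,
    f (a + (k + 1 : ℕ)), ⟨⟨_, rfl⟩, hkT⟩, ?_⟩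
  · refine List.Nodup.map_on (fun i hi j hj hij => ?_) List.nodup_range
    rw [List.mem_range] at hi hj
    simpa [ZMod.val_cast_of_lt (hi.trans hkn), ZMod.val_cast_of_lt (hj.trans hkn)]
      using congrArg ZMod.val (add_left_cancel (hf hij))
  · rw [List.isChain_map, List.isChain_range_succ]
    intro i _
    simpa [add_assoc] using hadj (a + i)
  · simp only [List.mem_map, List.mem_range]
    rintro _ ⟨i, hi, rfl⟩
    exact ⟨⟨_, rfl⟩, hk_min i hi⟩
  · simpa [List.getLast?_range, add_assoc] using hadj (a + k)

theorem List.exists_split_at_last_mem {α : Type*} {p : α → Prop} :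
    ∀ {L : List α}, (∃ x ∈ L, p x) → ∃ A a B, L = A ++ a :: B ∧ p a ∧ ∀ b ∈ B, ¬ p b
  | [], h => by simp at h
  | x :: L, h => by
    by_cases hL : ∃ y ∈ L, p y
    · obtain ⟨A, a, B, rfl, ha, hB⟩ := exists_split_at_last_mem hL
      exact ⟨x :: A, a, B, rfl, ha, hB⟩
    · push Not at hL
      simp only [List.mem_cons, exists_eq_or_imp] at h
      exact ⟨[], x, L, rfl, h.resolve_right fun ⟨y, hy, hpy⟩ => hL y hy hpy, hL⟩

theorem Digraph.hasDirCycleOfLen_length {D : Digraph V} {L : List V} (hL : L ≠ [])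
    (hnd : L.Nodup) (hch : L.IsChain D.Adj)
    (hclose : ∀ x ∈ L.getLast?, ∀ y ∈ L.head?, D.Adj x y) : D.HasDirCycleOfLen L.length := by
  have hn : 0 < L.length := List.length_pos_iff.mpr hL
  have : NeZero L.length := ⟨hn.ne'⟩
  refine ⟨hn, fun i => L[i.val]'(ZMod.val_lt i), fun i j h => ?_, fun i => ?_⟩
  · exact ZMod.val_injective _ ((hnd.getElem_inj_iff).1 h)
  have hsucc : (i + 1).val = (i.val + 1) % L.length := by
    rw [ZMod.val_add, ZMod.val_one_eq_one_mod, Nat.add_mod_mod]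
  have hi := ZMod.val_lt i
  rcases Nat.lt_or_ge (i.val + 1) L.length with h | h
  · simpa [hsucc, Nat.mod_eq_of_lt h] using hch.getElem i.val h
  · have hwrap : (i + 1).val = 0 := by
      rw [hsucc, show i.val + 1 = L.length by omega, Nat.mod_self]
    have hlast : i.val = L.length - 1 := by omega
    simpa [hwrap, hlast] using hclose _ (by simp [List.getLast?_eq_getElem?]) _
      (by simp [List.head?_eq_getElem?])

theorem ZMod.natCast_ne_zero_of_pos_of_lt {ℓ a : ℕ} (ha : 0 < a) (haℓ : a < ℓ) :
    (a : ZMod ℓ) ≠ 0 := by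
  rw [Ne, ZMod.natCast_eq_zero_iff]
  exact Nat.not_dvd_of_pos_of_lt ha haℓ

theorem SimpleGraph.not_adj_add_natCast {W : Type*} {G : SimpleGraph W} {ℓ : ℕ}
    {f : ZMod ℓ → W} (hf : ∀ i j, G.Adj (f i) (f j) ↔ (j = i + 1 ∨ i = j + 1))
    (i : ZMod ℓ) {d : ℕ} (hd : 2 ≤ d) (hdℓ : d + 2 ≤ ℓ) : ¬ G.Adj (f i) (f (i + d)) := by
  obtain ⟨e, rfl⟩ : ∃ e, d = e + 1 := ⟨d - 1, by omega⟩
  rw [hf]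
  rintro (h | h)
  · refine ZMod.natCast_ne_zero_of_pos_of_lt (ℓ := ℓ) (a := e) (by omega) (by omega) ?_
    simpa using h
  · refine ZMod.natCast_ne_zero_of_pos_of_lt (ℓ := ℓ) (a := e + 2) (by omega) (by omega) ?_
    push_cast at h ⊢
    linear_combination -h

/-- An induced `ℓ`-cycle `C 0, …, C (ℓ - 1)` of the cycle graph, indexed by `ℕ` instead of
`ZMod ℓ`. -/
structure Digraph.IsCycleNecklace (D : Digraph V) (ℓ : ℕ) (C : ℕ → Set (V × V)) : Prop where
  isDirCycleSet : ∀ k, D.IsDirCycleSet (C k)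
  meet : ∀ k, k + 1 < ℓ → (cycleVerts (C k) ∩ cycleVerts (C (k + 1))).Nonempty
  meet_last : (cycleVerts (C (ℓ - 1)) ∩ cycleVerts (C 0)).Nonempty
  disjoint : ∀ k m, k + 2 ≤ m → m + 2 ≤ ℓ + k →
    Disjoint (cycleVerts (C k)) (cycleVerts (C m))

theorem Digraph.isCycleNecklace_of_inducedCycle {D : Digraph V} {ℓ : ℕ} (hℓ : 0 < ℓ)
    {f : ZMod ℓ → {A : Set (V × V) // D.IsDirCycleSet A}} (hf : Function.Injective f)
    (hadj : ∀ i j, D.cycleGraph.Adj (f i) (f j) ↔ (j = i + 1 ∨ i = j + 1)) :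
    D.IsCycleNecklace ℓ fun k => (f k).1 where
  isDirCycleSet k := (f k).2
  meet k _ := ((hadj k (k + 1 : ℕ)).2 (Or.inl (by push_cast; rfl))).2
  meet_last := by
    refine ((hadj (ℓ - 1 : ℕ) (0 : ℕ)).2 (Or.inl ?_)).2
    rw [← Nat.cast_succ, Nat.succ_eq_add_one, Nat.sub_add_cancel hℓ, ZMod.natCast_self,
      Nat.cast_zero]
  disjoint k m hkm hmk := by
    obtain ⟨d, rfl⟩ : ∃ d, m = k + d := ⟨m - k, by omega⟩
    have hne : f k ≠ f (k + d : ℕ) := fun h => ZMod.natCast_ne_zero_of_pos_of_lt (ℓ := ℓ)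
      (a := d) (by omega) (by omega) (by simpa using hf h)
    rw [Set.disjoint_iff_inter_eq_empty, ← Set.not_nonempty_iff_eq_empty]
    intro hmeet
    refine SimpleGraph.not_adj_add_natCast hadj k (d := d) (by omega) (by omega) ?_
    rw [← Nat.cast_add]
    exact ⟨hne, hmeet⟩

/-- A directed path `Q` from `w` that has run along `C 0, …, C j` and continues with an arc into
`z ∈ C j ∩ C (j + 1)`; apart from `w`, it misses all later cycles of the necklace. -/
structure Digraph.IsPartialTour (D : Digraph V) (C : ℕ → Set (V × V)) (ℓ : ℕ) (w : V) (j : ℕ)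
    (Q : List V) (z : V) : Prop where
  head?_eq : Q.head? = some w
  nodup : Q.Nodup
  isChain : Q.IsChain D.Adj
  length_ge : j + 1 ≤ Q.length
  not_mem_later : ∀ x ∈ Q, x ≠ w → ∀ m, j < m → m < ℓ → x ∉ cycleVerts (C m)
  target_mem : z ∈ cycleVerts (C j)
  target_mem_succ : z ∈ cycleVerts (C (j + 1))
  adj_target : ∀ x ∈ Q.getLast?, D.Adj x z

namespace Digraph.IsPartialTour

variable {D : Digraph V} {C : ℕ → Set (V × V)} {ℓ j : ℕ} {w z : V} {Q P : List V}

theorem isChain_append (hT : D.IsPartialTour C ℓ w j Q z) (hP : P.IsChain D.Adj)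
    (hPhead : P.head? = some z) : (Q ++ P).IsChain D.Adj :=
  hT.isChain.append hP fun x hx y hy => by
    rw [hPhead, Option.mem_some_iff] at hy
    exact hy ▸ hT.adj_target x hx

theorem length_append_ge (hT : D.IsPartialTour C ℓ w j Q z) (hP : P ≠ []) :
    j + 2 ≤ (Q ++ P).length := by
  have := hT.length_ge
  have := List.length_pos_iff.2 hP
  simp only [List.length_append]
  omega

end Digraph.IsPartialTour

namespace Digraph.IsCycleNecklace

variable {D : Digraph V} {ℓ : ℕ} {C : ℕ → Set (V × V)}

/-- The start `w` is the last vertex of `C (ℓ - 1)` on the first path along `C 0`, so that the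
rest of the tour never returns to `C (ℓ - 1)` before the final leg. -/
theorem exists_partialTour_zero (hC : D.IsCycleNecklace ℓ C) (hℓ : 4 ≤ ℓ) :
    ∃ w Q z, w ∈ cycleVerts (C 0) ∧ w ∈ cycleVerts (C (ℓ - 1)) ∧
      D.IsPartialTour C ℓ w 0 Q z := by
  obtain ⟨u, hul, hu0⟩ := hC.meet_last
  have hu1 : u ∉ cycleVerts (C 1) :=
    Set.disjoint_right.1 (hC.disjoint 1 (ℓ - 1) (by omega) (by omega)) hul
  obtain ⟨L, hLhead, hLnd, hLch, hLmem, z, ⟨hz0, hz1⟩, hLz⟩ :=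
    (hC.isDirCycleSet 0).exists_path_to hu0 hu1 (hC.meet 0 (by omega))
  obtain ⟨A, w, B, rfl, hwl, hB⟩ := List.exists_split_at_last_mem
    ⟨u, List.mem_of_mem_head? hLhead, hul⟩
  refine ⟨w, w :: B, z, (hLmem w (by simp)).1, hwl, ⟨rfl, hLnd.sublist (by simp),
    hLch.suffix (by simp), by simp, fun x hx hxw m hm hmℓ hxm => ?_, hz0, hz1, ?_⟩⟩
  · have hxB : x ∈ B := (List.mem_cons.1 hx).resolve_left hxw
    have hxL : x ∈ A ++ w :: B := by simp [hxB]
    by_cases hm1 : m = 1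
    · exact (hLmem x hxL).2 (hm1 ▸ hxm)
    by_cases hml : m = ℓ - 1
    · exact hB x hxB (hml ▸ hxm)
    exact Set.disjoint_left.1 (hC.disjoint 0 m (by omega) (by omega)) (hLmem x hxL).1 hxm
  · simpa [List.getLast?_append] using hLz

theorem exists_partialTour_succ (hC : D.IsCycleNecklace ℓ C) (hℓ : 4 ≤ ℓ) {w : V}
    (hw0 : w ∈ cycleVerts (C 0)) (hwl : w ∈ cycleVerts (C (ℓ - 1))) {j : ℕ} (hj : j + 3 ≤ ℓ)
    {Q : List V} {z : V} (hT : D.IsPartialTour C ℓ w j Q z) :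
    ∃ Q' z', D.IsPartialTour C ℓ w (j + 1) Q' z' := by
  have hz : z ∉ cycleVerts (C (j + 2)) :=
    Set.disjoint_left.1 (hC.disjoint j (j + 2) (by omega) (by omega)) hT.target_mem
  obtain ⟨P, hPhead, hPnd, hPch, hPmem, z', ⟨hz'1, hz'2⟩, hPz'⟩ :=
    (hC.isDirCycleSet (j + 1)).exists_path_to hT.target_mem_succ hz (hC.meet (j + 1) (by omega))
  have hw : w ∉ cycleVerts (C (j + 1)) := by
    rcases Nat.eq_zero_or_pos j with rfl | hj0
    · exact Set.disjoint_right.1 (hC.disjoint 1 (ℓ - 1) (by omega) (by omega)) hwl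
    · exact Set.disjoint_left.1 (hC.disjoint 0 (j + 1) (by omega) (by omega)) hw0
  have hPne : P ≠ [] := by rintro rfl; simp at hPhead
  refine ⟨Q ++ P, z', ⟨by simp [hT.head?_eq], ?_, ?_, ?_, ?_, hz'1, hz'2, ?_⟩⟩
  · refine List.nodup_append.2 ⟨hT.nodup, hPnd, fun x hxQ y hyP hxy => ?_⟩
    subst hxy
    by_cases hxw : x = w
    · exact hw (hxw ▸ (hPmem x hyP).1)
    · exact hT.not_mem_later x hxQ hxw (j + 1) (by omega) (by omega) (hPmem x hyP).1
  · exact hT.isChain_append hPch hPhead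
  · exact hT.length_append_ge hPne
  · intro x hx hxw m hm hmℓ
    rcases List.mem_append.1 hx with hxQ | hxP
    · exact hT.not_mem_later x hxQ hxw m (by omega) hmℓ
    by_cases hm2 : m = j + 2
    · exact hm2 ▸ (hPmem x hxP).2
    exact Set.disjoint_left.1 (hC.disjoint (j + 1) m (by omega) (by omega)) (hPmem x hxP).1
  · simpa [List.getLast?_append_of_ne_nil _ hPne] using hPz'

theorem exists_long_dirCycle_of_partialTour (hC : D.IsCycleNecklace ℓ C) (hℓ : 4 ≤ ℓ) {w : V}
    (hw0 : w ∈ cycleVerts (C 0)) (hwl : w ∈ cycleVerts (C (ℓ - 1)))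
    {Q : List V} {z : V} (hT : D.IsPartialTour C ℓ w (ℓ - 2) Q z) :
    ∃ n, ℓ ≤ n ∧ D.HasDirCycleOfLen n := by
  have hzw : z ∉ ({w} : Set V) := fun h =>
    Set.disjoint_left.1 (hC.disjoint 0 (ℓ - 2) (by omega) (by omega)) hw0 (h ▸ hT.target_mem)
  have hzl : z ∈ cycleVerts (C (ℓ - 1)) := by
    simpa [show ℓ - 2 + 1 = ℓ - 1 by omega] using hT.target_mem_succ
  obtain ⟨P, hPhead, hPnd, hPch, hPmem, t, ⟨-, ht⟩, hPt⟩ :=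
    (hC.isDirCycleSet (ℓ - 1)).exists_path_to hzl hzw ⟨w, hwl, rfl⟩
  rw [Set.mem_singleton_iff.1 ht] at hPt
  have hPne : P ≠ [] := by rintro rfl; simp at hPhead
  have hQP : (Q ++ P).Nodup := by
    refine List.nodup_append.2 ⟨hT.nodup, hPnd, fun x hxQ y hyP hxy => ?_⟩
    subst hxy
    by_cases hxw : x = w
    · exact (hPmem x hyP).2 hxw
    · exact hT.not_mem_later x hxQ hxw (ℓ - 1) (by omega) (by omega) (hPmem x hyP).1
  refine ⟨(Q ++ P).length, by have := hT.length_append_ge hPne; omega,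
    Digraph.hasDirCycleOfLen_length (by simp [hPne]) hQP (hT.isChain_append hPch hPhead) ?_⟩
  simpa [List.getLast?_append_of_ne_nil _ hPne, hT.head?_eq] using hPt

theorem exists_long_dirCycle (hC : D.IsCycleNecklace ℓ C) (hℓ : 4 ≤ ℓ) :
    ∃ n, ℓ ≤ n ∧ D.HasDirCycleOfLen n := by
  obtain ⟨w, Q₀, z₀, hw0, hwl, hT₀⟩ := hC.exists_partialTour_zero hℓ
  have htour : ∀ j, j + 2 ≤ ℓ → ∃ Q z, D.IsPartialTour C ℓ w j Q z := by
    intro j hj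
    induction j with
    | zero => exact ⟨Q₀, z₀, hT₀⟩
    | succ j ih =>
      obtain ⟨Q, z, hT⟩ := ih (by omega)
      exact hC.exists_partialTour_succ hℓ hw0 hwl (by omega) hT
  obtain ⟨Q, z, hT⟩ := htour (ℓ - 2) (by omega)
  exact hC.exists_long_dirCycle_of_partialTour hℓ hw0 hwl hT

end Digraph.IsCycleNecklace

end

theorem dirCycle_of_inducedCycle_in_cycleGraph_general {V : Type*} (D : Digraph V)
    (ℓ : ℕ) (hℓ : 4 ≤ ℓ)
    (hind : D.cycleGraph.HasInducedCycleOfLen ℓ) :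
    ∃ n : ℕ, ℓ ≤ n ∧ D.HasDirCycleOfLen n := by
  obtain ⟨f, hf, hadj⟩ := hind
  exact (Digraph.isCycleNecklace_of_inducedCycle (by omega) hf hadj).exists_long_dirCycle hℓ

/-- If the cycle graph `C(D)` of a digraph `D` contains an induced cycle of length
`ℓ ≥ 4`, then `D` contains a directed cycle of length at least `ℓ`. -/
theorem dirCycle_of_inducedCycle_in_cycleGraph {V : Type*} [Fintype V] (D : Digraph V)
    (hirr : ∀ v : V, ¬ D.Adj v v)
    (ℓ : ℕ) (hℓ : 4 ≤ ℓ)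
    (hind : D.cycleGraph.HasInducedCycleOfLen ℓ) :
    ∃ n : ℕ, ℓ ≤ n ∧ D.HasDirCycleOfLen n :=
  dirCycle_of_inducedCycle_in_cycleGraph_general D ℓ hℓ hind
end

section
/- For any connected vertex transitive digraph D on at least 2 vertices, the cycle graph C(D) is nearly transitive: for any two vertices C_1, C_2 of C(D), there exists an automorphism of C(D) mapping C_1 to C_2 or to a neighbor of C_2. -/
/-- A digraph is vertex transitive if for any two vertices `u, v` there is an
automorphism of the digraph mapping `u` to `v`. -/
def Digraph.IsVertexTransitive {V : Type*} (D : Digraph V) : Prop :=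
  ∀ u v : V, ∃ e : V ≃ V, (∀ x y, D.Adj (e x) (e y) ↔ D.Adj x y) ∧ e u = v

/-- The underlying undirected (simple) graph of a digraph. -/
def Digraph.underlying {V : Type*} (D : Digraph V) : SimpleGraph V where
  Adj x y := x ≠ y ∧ (D.Adj x y ∨ D.Adj y x)
  symm := ⟨fun x y h => ⟨h.1.symm, h.2.symm⟩⟩
  loopless := ⟨fun x h => h.1 rfl⟩

/-- A graph is nearly transitive if for any two vertices `u, v` there is a graph
automorphism mapping `u` to `v` or to a neighbour of `v`. -/
def SimpleGraph.NearlyTransitive {W : Type*} (G : SimpleGraph W) : Prop :=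
  ∀ u v : W, ∃ e : W ≃ W, (∀ x y, G.Adj (e x) (e y) ↔ G.Adj x y) ∧
    (e u = v ∨ G.Adj (e u) v)

/-!
A digraph automorphism `e` of `D` permutes the directed cycles of `D` (`A ↦ (e × e) '' A`) and
moves their vertex sets along `e`, so it induces an automorphism of `C(D)`. Given cycles `C₁, C₂`,
pick `u` on `C₁`, `v` on `C₂` and an automorphism sending `u` to `v`: the image of `C₁` then
passes through `v`, hence equals `C₂` or is adjacent to it.
-/

theorem cycleVerts_image_prodMap {V : Type*} (e : V ≃ V) (A : Set (V × V)) :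
    cycleVerts (Prod.map e e '' A) = e '' cycleVerts A := by
  simp only [cycleVerts, Set.image_image, Prod.map_fst]

namespace Digraph

variable {V : Type*} {D : Digraph V} {e : V ≃ V}

theorem IsDirCycleSet.image_prodMap (he : ∀ x y, D.Adj (e x) (e y) ↔ D.Adj x y)
    {A : Set (V × V)} (hA : D.IsDirCycleSet A) : D.IsDirCycleSet (Prod.map e e '' A) := by
  obtain ⟨n, hn, f, hf, hadj, rfl⟩ := hA
  refine ⟨n, hn, e ∘ f, e.injective.comp hf, fun i => (he _ _).2 (hadj i), ?_⟩
  rw [← Set.range_comp]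
  rfl

theorem adj_symm_apply_iff (he : ∀ x y, D.Adj (e x) (e y) ↔ D.Adj x y) (x y : V) :
    D.Adj (e.symm x) (e.symm y) ↔ D.Adj x y := by
  rw [← he, e.apply_symm_apply, e.apply_symm_apply]

theorem isDirCycleSet_image_prodMap_iff (he : ∀ x y, D.Adj (e x) (e y) ↔ D.Adj x y)
    (A : Set (V × V)) : D.IsDirCycleSet (Prod.map e e '' A) ↔ D.IsDirCycleSet A := by
  refine ⟨fun h => ?_, IsDirCycleSet.image_prodMap he⟩
  have := h.image_prodMap (adj_symm_apply_iff he)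
  rwa [Set.image_image, show (fun p => Prod.map e.symm e.symm (Prod.map e e p)) = id by
    ext <;> simp, Set.image_id] at this

theorem IsDirCycleSet.exists_mem_cycleVerts {A : Set (V × V)} (hA : D.IsDirCycleSet A) :
    ∃ v, v ∈ cycleVerts A := by
  obtain ⟨n, hn, f, -, -, rfl⟩ := hA
  have : NeZero n := ⟨by omega⟩
  exact ⟨f 0, (f 0, f 1), ⟨0, by simp⟩, rfl⟩

theorem cycleGraph_eq_or_adj_of_mem_cycleVerts {C₁ C₂ : {A : Set (V × V) // D.IsDirCycleSet A}}
    {v : V} (h₁ : v ∈ cycleVerts C₁.1) (h₂ : v ∈ cycleVerts C₂.1) :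
    C₁ = C₂ ∨ D.cycleGraph.Adj C₁ C₂ := by
  by_cases h : C₁ = C₂
  · exact Or.inl h
  · exact Or.inr ⟨h, v, h₁, h₂⟩

def cycleGraphIso (he : ∀ x y, D.Adj (e x) (e y) ↔ D.Adj x y) :
    D.cycleGraph ≃g D.cycleGraph where
  toEquiv := (Equiv.Set.congr (e.prodCongr e)).subtypeEquiv fun A =>
    (isDirCycleSet_image_prodMap_iff he A).symm
  map_rel_iff' {C₁ C₂} := by
    change _ ∧ (cycleVerts (Prod.map e e '' C₁.1) ∩ cycleVerts (Prod.map e e '' C₂.1)).Nonempty ↔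
      C₁ ≠ C₂ ∧ _
    rw [cycleVerts_image_prodMap, cycleVerts_image_prodMap, ← Set.image_inter e.injective,
      Set.image_nonempty, (EmbeddingLike.injective _).ne_iff]

theorem cycleGraphIso_apply_coe (he : ∀ x y, D.Adj (e x) (e y) ↔ D.Adj x y)
    (C : {A : Set (V × V) // D.IsDirCycleSet A}) :
    (cycleGraphIso he C).1 = Prod.map e e '' C.1 :=
  rfl

end Digraph

theorem cycleGraph_nearlyTransitive_general {V : Type*} (D : Digraph V)
    (htrans : D.IsVertexTransitive) :
    D.cycleGraph.NearlyTransitive := by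
  intro C₁ C₂
  obtain ⟨u, hu⟩ := C₁.2.exists_mem_cycleVerts
  obtain ⟨v, hv⟩ := C₂.2.exists_mem_cycleVerts
  obtain ⟨e, he, rfl⟩ := htrans u v
  let φ := Digraph.cycleGraphIso he
  have hφu : e u ∈ cycleVerts (φ C₁).1 := by
    rw [Digraph.cycleGraphIso_apply_coe, cycleVerts_image_prodMap]
    exact Set.mem_image_of_mem e hu
  exact ⟨φ, fun _ _ => φ.map_rel_iff, Digraph.cycleGraph_eq_or_adj_of_mem_cycleVerts hφu hv⟩

/-- For any connected vertex transitive digraph `D` on at least two vertices, its cycle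
graph `C(D)` is nearly transitive. -/
theorem cycleGraph_nearlyTransitive {V : Type*} [Fintype V] (D : Digraph V)
    (hirr : ∀ v : V, ¬ D.Adj v v)
    (hconn : D.underlying.Connected)
    (htrans : D.IsVertexTransitive)
    (hcard : 2 ≤ Fintype.card V) :
    D.cycleGraph.NearlyTransitive :=
  cycleGraph_nearlyTransitive_general D htrans
end
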